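/- arXiv:2410.21238 — 4 statements merged into one kernel-verified Lean document; each statement's English description precedes it below -/
import Mathlib

section
/- There exist λ₀ ≥ 1 and C₁ > 0 such that for every λ ≥ λ₀ and every x ∈ ℝⁿ with ∑_{i∈I} e^{λ u_i(x)} = 1, one has |∑_{i∈I} e^{λ u_i(x)} ∇u_i(x)| ≥ C₁⁻¹, where ∇ denotes the Euclidean gradient and |·| the Euclidean norm. In particular the constant C₁ is independent of λ. -/
set_option maxHeartbeats 1000000
open Finset

/-- Fermat-type lemma: if `f ≤ 0` on a convex set `Ω`, `f x = 0` at `x ∈ Ω`,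
then the gradient points "outward": `⟪∇f x, y - x⟫ ≤ 0` for all `y ∈ Ω`. -/
lemma grad_inner_nonpos {E : Type*} [NormedAddCommGroup E] [InnerProductSpace ℝ E] [CompleteSpace E]
    (f : E → ℝ) (Ω : Set E) (hconv : Convex ℝ Ω) (hle : ∀ z ∈ Ω, f z ≤ 0)
    {x y : E} (hx : x ∈ Ω) (hy : y ∈ Ω) (hfx : f x = 0) (hdiff : DifferentiableAt ℝ f x) :
    (inner ℝ (gradient f x) (y - x) : ℝ) ≤ 0 := by
  have hmax : IsLocalMaxOn f Ω x := by
    filter_upwards [self_mem_nhdsWithin] with z hz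
    rw [hfx]; exact hle z hz
  have hcone : y - x ∈ posTangentConeAt Ω x :=
    sub_mem_posTangentConeAt_of_segment_subset (hconv.segment_subset hx hy)
  have hkey := hmax.hasFDerivWithinAt_nonpos hdiff.hasFDerivAt.hasFDerivWithinAt hcone
  have heq : (inner ℝ (gradient f x) (y - x) : ℝ) = fderiv ℝ f x (y - x) := by
    rw [show gradient f x = (InnerProductSpace.toDual ℝ E).symm (fderiv ℝ f x) from rfl,
      ← InnerProductSpace.toDual_apply_apply, LinearIsometryEquiv.apply_symm_apply]
  linarith [heq ▸ hkey]

/-- For a convex Riemannian polytope type domain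
`Ω = ⋂ i, {u i ≤ 0}` in `ℝⁿ` (`n ≥ 2`, each `u i` smooth with `0` a regular value,
`Ω` bounded, convex, with nonempty interior), there exist `λ₀ ≥ 1` and `C₁ > 0`
(independent of `λ`) such that for every `λ ≥ λ₀` and every `x` with
`∑ i, exp (λ * u i x) = 1`, one has `‖∑ i, exp (λ * u i x) • ∇u_i(x)‖ ≥ C₁⁻¹`. -/
theorem smoothing_gradient_lower_bound
    {n : ℕ} (hn : 2 ≤ n) (I : Type) [Fintype I] [Nonempty I]
    (u : I → EuclideanSpace ℝ (Fin n) → ℝ)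
    (hu_smooth : ∀ i, ContDiff ℝ (⊤ : ℕ∞) (u i))
    (hu_reg : ∀ i x, u i x = 0 → gradient (u i) x ≠ 0)
    (hΩ_bdd : Bornology.IsBounded {x : EuclideanSpace ℝ (Fin n) | ∀ i, u i x ≤ 0})
    (hΩ_conv : Convex ℝ {x : EuclideanSpace ℝ (Fin n) | ∀ i, u i x ≤ 0})
    (hΩ_int : (interior {x : EuclideanSpace ℝ (Fin n) | ∀ i, u i x ≤ 0}).Nonempty) :
    ∃ lam₀ : ℝ, 1 ≤ lam₀ ∧ ∃ C₁ : ℝ, 0 < C₁ ∧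
      ∀ lam : ℝ, lam₀ ≤ lam →
        ∀ x : EuclideanSpace ℝ (Fin n),
          (∑ i, Real.exp (lam * u i x)) = 1 →
          C₁⁻¹ ≤ ‖∑ i, Real.exp (lam * u i x) • gradient (u i) x‖ := by
  classical
  let E := EuclideanSpace ℝ (Fin n)
  set Ω : Set E := {x | ∀ i, u i x ≤ 0} with hΩdef
  -- Ω is compact
  have hu_cont : ∀ i, Continuous (u i) := fun i => (hu_smooth i).continuous
  have hΩ_closed : IsClosed Ω := by
    have : Ω = ⋂ i, (u i) ⁻¹' Set.Iic 0 := by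
      ext x; simp [hΩdef, Set.mem_iInter]
    rw [this]
    exact isClosed_iInter fun i => (isClosed_Iic).preimage (hu_cont i)
  have hΩ_cpt : IsCompact Ω := Metric.isCompact_of_isClosed_isBounded hΩ_closed hΩ_bdd
  -- interior ball
  obtain ⟨x₀, hx₀⟩ := hΩ_int
  obtain ⟨r, hr, hball⟩ := Metric.isOpen_iff.1 isOpen_interior x₀ hx₀
  have hballΩ : Metric.ball x₀ r ⊆ Ω := hball.trans interior_subset
  have hx₀Ω : x₀ ∈ Ω := interior_subset hx₀
  -- gradients are continuous
  have hgcont : ∀ i, Continuous (fun x => gradient (u i) x) := by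
    intro i
    have h1 : Continuous (fderiv ℝ (u i)) := (hu_smooth i).continuous_fderiv (by simp)
    exact (InnerProductSpace.toDual ℝ E).symm.continuous.comp h1
  have hudiff : ∀ i (x : E), DifferentiableAt ℝ (u i) x :=
    fun i x => ((hu_smooth i).differentiable (by simp)).differentiableAt
  -- the key function on simplex × Ω
  set h : (I → ℝ) × E → ℝ :=
    fun p => ‖∑ i, p.1 i • gradient (u i) p.2‖ + ∑ i, p.1 i * (- u i p.2) with hhdef
  have hcont : Continuous h := by
    apply Continuous.add
    · apply Continuous.norm
      apply continuous_finset_sum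
      intro i _
      exact ((continuous_apply i).comp continuous_fst).smul ((hgcont i).comp continuous_snd)
    · apply continuous_finset_sum
      intro i _
      exact ((continuous_apply i).comp continuous_fst).mul
        (((hu_cont i).comp continuous_snd).neg)
  set S : Set ((I → ℝ) × E) := (stdSimplex ℝ I) ×ˢ Ω with hSdef
  have hScpt : IsCompact S := (isCompact_stdSimplex ℝ I).prod hΩ_cpt
  have hSne : S.Nonempty := by
    refine ⟨⟨fun _ => (Fintype.card I : ℝ)⁻¹, x₀⟩, ⟨⟨fun i => by positivity, ?_⟩, hx₀Ω⟩⟩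
    have hcard : (0 : ℝ) < (Fintype.card I : ℝ) := by
      exact_mod_cast Fintype.card_pos
    field_simp
    rw [Finset.sum_const, Finset.card_univ, nsmul_eq_mul]
    field_simp
  obtain ⟨p, hpS, hpmin⟩ := hScpt.exists_isMinOn hSne hcont.continuousOn
  set c := h p with hcdef
  -- positivity of c
  have hc : 0 < c := by
    obtain ⟨hθ, hxΩ⟩ := hpS
    obtain ⟨θ, x⟩ := p
    have hθnn := hθ.1
    have hθsum := hθ.2
    by_contra hc0
    push_neg at hc0
    have hterm2 : ∀ i, 0 ≤ θ i * (- u i x) := fun i =>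
      mul_nonneg (hθnn i) (by simpa using hxΩ i)
    have hsum2 : 0 ≤ ∑ i, θ i * (- u i x) := Finset.sum_nonneg fun i _ => hterm2 i
    have hnorm0 : ‖∑ i, θ i • gradient (u i) x‖ = 0 := by
      have := norm_nonneg (∑ i, θ i • gradient (u i) x)
      simp only [hcdef, hhdef] at hc0
      linarith
    have hG0 : ∑ i, θ i • gradient (u i) x = 0 := norm_eq_zero.mp hnorm0
    have hsum20 : ∑ i, θ i * (- u i x) = 0 := by
      simp only [hcdef, hhdef] at hc0
      linarith
    have hactive : ∀ i, θ i ≠ 0 → u i x = 0 := by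
      intro i hi
      have := (Finset.sum_eq_zero_iff_of_nonneg (fun i _ => hterm2 i)).mp hsum20 i (mem_univ i)
      rcases mul_eq_zero.mp this with h' | h'
      · exact absurd h' hi
      · linarith
    -- for each i with θ i ≠ 0, ⟪∇u_i x, x₀ - x⟫ ≤ -(r/2) ‖∇u_i x‖
    have hkey : ∀ i, θ i * (inner ℝ (gradient (u i) x) (x₀ - x) : ℝ)
        ≤ -(r/2) * (θ i * ‖gradient (u i) x‖) := by
      intro i
      rcases eq_or_ne (θ i) 0 with h0 | h0
      · simp [h0]
      have hui : u i x = 0 := hactive i h0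
      set g := gradient (u i) x with hgdef
      have hgne : g ≠ 0 := hu_reg i x hui
      have hgpos : 0 < ‖g‖ := norm_pos_iff.mpr hgne
      set y : E := x₀ + (r/2) • (‖g‖⁻¹ • g) with hydef
      have hyΩ : y ∈ Ω := by
        apply hballΩ
        rw [Metric.mem_ball, hydef]
        have : dist (x₀ + (r/2) • (‖g‖⁻¹ • g)) x₀ = ‖(r/2) • (‖g‖⁻¹ • g)‖ := by
          rw [dist_eq_norm, add_sub_cancel_left]
        rw [this, norm_smul, norm_smul, norm_inv, norm_norm]
        rw [Real.norm_eq_abs, abs_of_pos (by linarith)]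
        rw [inv_mul_cancel₀ (ne_of_gt hgpos), mul_one]
        linarith
      have hle : ∀ z ∈ Ω, u i z ≤ 0 := fun z hz => hz i
      have h1 := grad_inner_nonpos (u i) Ω hΩ_conv hle hxΩ hyΩ hui (hudiff i x)
      rw [← hgdef] at h1
      have hexp : y - x = (x₀ - x) + (r/2) • (‖g‖⁻¹ • g) := by
        rw [hydef]; abel
      rw [hexp, inner_add_right, real_inner_smul_right, real_inner_smul_right,
        real_inner_self_eq_norm_sq] at h1
      have h2 : (inner ℝ g (x₀ - x) : ℝ) ≤ -(r/2) * ‖g‖ := by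
        have : ‖g‖⁻¹ * (‖g‖ ^ 2) = ‖g‖ := by
          field_simp
        nlinarith [h1, this]
      calc θ i * (inner ℝ g (x₀ - x) : ℝ) ≤ θ i * (-(r/2) * ‖g‖) := by
            apply mul_le_mul_of_nonneg_left h2 (hθnn i)
        _ = -(r/2) * (θ i * ‖g‖) := by ring
    have hsumkey : (inner ℝ (∑ i, θ i • gradient (u i) x) (x₀ - x) : ℝ)
        ≤ -(r/2) * ∑ i, θ i * ‖gradient (u i) x‖ := by
      rw [sum_inner, Finset.mul_sum]
      exact Finset.sum_le_sum fun i _ => by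
        rw [real_inner_smul_left]; exact hkey i
    rw [hG0, inner_zero_left] at hsumkey
    -- some i has θ i > 0
    obtain ⟨i₀, hi₀⟩ : ∃ i, θ i ≠ 0 := by
      by_contra hall
      push_neg at hall
      simp [hall] at hθsum
    have hi₀pos : 0 < θ i₀ := lt_of_le_of_ne (hθnn i₀) (Ne.symm hi₀)
    have hgi₀ : 0 < ‖gradient (u i₀) x‖ :=
      norm_pos_iff.mpr (hu_reg i₀ x (hactive i₀ hi₀))
    have hsumpos : 0 < ∑ i, θ i * ‖gradient (u i) x‖ := by
      apply Finset.sum_pos' (fun i _ => mul_nonneg (hθnn i) (norm_nonneg _))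
      exact ⟨i₀, mem_univ i₀, mul_pos hi₀pos hgi₀⟩
    nlinarith
  -- conclusion
  have hcard : (0:ℝ) < (Fintype.card I : ℝ) := by exact_mod_cast Fintype.card_pos
  refine ⟨max 1 (2 * (Fintype.card I : ℝ) / c), le_max_left _ _, 2 / c, by positivity, ?_⟩
  intro lam hlam x hx
  have hlam1 : (1:ℝ) ≤ lam := le_trans (le_max_left _ _) hlam
  have hlampos : 0 < lam := lt_of_lt_of_le one_pos hlam1
  set w : I → ℝ := fun i => Real.exp (lam * u i x) with hwdef
  have hwpos : ∀ i, 0 < w i := fun i => Real.exp_pos _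
  have hxΩ : x ∈ Ω := by
    intro i
    have hwle1 : w i ≤ 1 := by
      rw [← hx]
      exact Finset.single_le_sum (fun j _ => (hwpos j).le) (mem_univ i)
    have : lam * u i x ≤ 0 := by
      rw [← Real.exp_zero] at hwle1
      exact (Real.exp_le_exp.mp hwle1)
    nlinarith
  have hwS : (⟨w, x⟩ : (I → ℝ) × E) ∈ S := ⟨⟨fun i => (hwpos i).le, hx⟩, hxΩ⟩
  have hhc : c ≤ h (w, x) := hpmin hwS
  -- bound the second term
  have hterm : ∀ i, w i * (- u i x) ≤ 1 / lam := by
    intro i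
    have hui : u i x ≤ 0 := hxΩ i
    set t := -(lam * u i x) with htdef
    have ht : 0 ≤ t := by nlinarith
    have h1 : t ≤ Real.exp t := (Real.add_one_le_exp t).trans' (by linarith)
    have h2 : w i * (- u i x) = Real.exp (-t) * t / lam := by
      rw [hwdef]
      simp only [htdef, neg_neg]
      field_simp
    rw [h2, Real.exp_neg]
    rw [div_le_div_iff₀ hlampos hlampos]
    have h3 : (Real.exp t)⁻¹ * t ≤ 1 := by
      rw [inv_mul_le_iff₀ (Real.exp_pos t)]
      linarith
    nlinarith [Real.exp_pos t]
  have hsum2le : ∑ i, w i * (- u i x) ≤ (Fintype.card I : ℝ) / lam := by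
    calc ∑ i, w i * (- u i x) ≤ ∑ _i : I, 1 / lam :=
          Finset.sum_le_sum fun i _ => hterm i
      _ = (Fintype.card I : ℝ) / lam := by
          rw [Finset.sum_const, Finset.card_univ, nsmul_eq_mul]
          ring
  have hlamge : 2 * (Fintype.card I : ℝ) / c ≤ lam := le_trans (le_max_right _ _) hlam
  have hcardle : (Fintype.card I : ℝ) / lam ≤ c / 2 := by
    rw [div_le_div_iff₀ hlampos (by norm_num : (0:ℝ) < 2)]
    rw [div_le_iff₀ hc] at hlamge
    nlinarith
  have : (2 / c)⁻¹ = c / 2 := by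
    field_simp
  rw [this]
  have hhval : h (w, x) = ‖∑ i, w i • gradient (u i) x‖ + ∑ i, w i * (- u i x) := rfl
  have : c ≤ ‖∑ i, w i • gradient (u i) x‖ + c / 2 := by
    calc c ≤ h (w, x) := hhc
      _ ≤ ‖∑ i, w i • gradient (u i) x‖ + c / 2 := by
          rw [hhval]
          linarith [le_trans hsum2le hcardle]
  have hfin : c / 2 ≤ ‖∑ i, w i • gradient (u i) x‖ := by linarith
  exact hfin
end

section
/- There exist λ₀ ≥ 1 and C₂ > 0 such that for every λ ≥ λ₀ and every x ∈ Σ_λ (i.e. ∑_{i∈I} e^{λ u_i(x)} = 1), one has |∑_{i∈I} e^{λ u_i(x)} w_i(x) N_i(x)| ≥ C₂⁻¹, where |·| is the Euclidean norm and the constant C₂ is independent of λ. -/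
open Matrix RealInnerProductSpace

private lemma gradCont' {n : ℕ} {f : EuclideanSpace ℝ (Fin n) → ℝ} (hf : ContDiff ℝ (⊤ : ℕ∞) f) :
    Continuous (gradient f) := by
  have h1 : Continuous (fderiv ℝ f) := hf.continuous_fderiv (by simp)
  exact ((InnerProductSpace.toDual ℝ (EuclideanSpace ℝ (Fin n))).symm.continuous).comp h1

private lemma derivNonpos' {g : ℝ → ℝ} {d : ℝ} (hg : HasDerivAt g d 0)
    (h : ∀ t ∈ Set.Ioc (0:ℝ) 1, g t ≤ g 0) : d ≤ 0 := by
  rw [hasDerivAt_iff_tendsto_slope] at hg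
  have h2 : Filter.Tendsto (slope g 0) (nhdsWithin 0 (Set.Ioi 0)) (nhds d) :=
    hg.mono_left (nhdsWithin_mono 0 fun t ht => Set.mem_compl_singleton_iff.mpr (ne_of_gt ht))
  refine le_of_tendsto h2 ?_
  filter_upwards [Ioo_mem_nhdsGT_of_mem (Set.left_mem_Ico.mpr one_pos)] with t ht
  have h3 := h t ⟨ht.1, le_of_lt ht.2⟩
  rw [slope_def_field]
  apply div_nonpos_of_nonpos_of_nonneg
  · linarith
  · linarith [ht.1]

private lemma lineDeriv' {n : ℕ} {f : EuclideanSpace ℝ (Fin n) → ℝ} (hf : ContDiff ℝ (⊤ : ℕ∞) f)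
    (x v : EuclideanSpace ℝ (Fin n)) :
    HasDerivAt (fun t : ℝ => f (x + t • v)) (⟪gradient f x, v⟫) 0 := by
  have hdx : DifferentiableAt ℝ f x := (hf.differentiable (by simp)).differentiableAt
  have hgf : HasFDerivAt f
      (InnerProductSpace.toDual ℝ (EuclideanSpace ℝ (Fin n)) (gradient f x)) x :=
    hdx.hasGradientAt.hasFDerivAt
  have hline : HasDerivAt (fun t : ℝ => x + t • v) v 0 := by
    simpa using ((hasDerivAt_id (0:ℝ)).smul_const v).const_add x
  have hgf' : HasFDerivAt f
      (InnerProductSpace.toDual ℝ (EuclideanSpace ℝ (Fin n)) (gradient f x))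
      (x + (0:ℝ) • v) := by
    rw [show x + (0:ℝ) • v = x by simp]
    exact hgf
  have := hgf'.comp_hasDerivAt (0:ℝ) hline
  simpa [Function.comp_def, InnerProductSpace.toDual_apply_apply] using this

set_option maxHeartbeats 1000000 in
/-- In the setting of a convex Riemannian polytope type domain
`Ω = ⋂ i, {u i ≤ 0}` in `ℝⁿ` (`n ≥ 2`), with Euclidean gradients `∇u_i` nonvanishing
on `Ω`, and a smooth field `G` of symmetric positive definite matrices (the
coordinate representation of a Riemannian metric `g`), set
`w_i(x) := √(∇u_i(x)ᵀ G(x)⁻¹ ∇u_i(x))` and `N_i(x) := ∇u_i(x)/|∇u_i(x)|`.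
There exist `λ₀ ≥ 1` and `C₂ > 0` (independent of `λ`) such that for every
`λ ≥ λ₀` and every `x ∈ Σ_λ` (i.e. `∑ i, exp (λ * u i x) = 1`), one has
`‖∑ i, exp (λ * u i x) • (w_i x • N_i x)‖ ≥ C₂⁻¹`. -/
theorem smoothing_weighted_normal_lower_bound
    {n : ℕ} (hn : 2 ≤ n) (I : Type) [Fintype I] [Nonempty I]
    (u : I → EuclideanSpace ℝ (Fin n) → ℝ)
    (hu_smooth : ∀ i, ContDiff ℝ (⊤ : ℕ∞) (u i))
    (hu_reg : ∀ i x, u i x = 0 → gradient (u i) x ≠ 0)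
    (hΩ_bdd : Bornology.IsBounded {x : EuclideanSpace ℝ (Fin n) | ∀ i, u i x ≤ 0})
    (hΩ_conv : Convex ℝ {x : EuclideanSpace ℝ (Fin n) | ∀ i, u i x ≤ 0})
    (hΩ_int : (interior {x : EuclideanSpace ℝ (Fin n) | ∀ i, u i x ≤ 0}).Nonempty)
    (hgrad_ne : ∀ i, ∀ x ∈ {x : EuclideanSpace ℝ (Fin n) | ∀ j, u j x ≤ 0},
      gradient (u i) x ≠ 0)
    (G : EuclideanSpace ℝ (Fin n) → Matrix (Fin n) (Fin n) ℝ)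
    (hG_smooth : ∀ i j, ContDiff ℝ (⊤ : ℕ∞) (fun x => G x i j))
    (hG_pd : ∀ x, (G x).PosDef) :
    ∃ lam₀ : ℝ, 1 ≤ lam₀ ∧ ∃ C₂ : ℝ, 0 < C₂ ∧
      ∀ lam : ℝ, lam₀ ≤ lam →
        ∀ x : EuclideanSpace ℝ (Fin n),
          (∑ i, Real.exp (lam * u i x)) = 1 →
          C₂⁻¹ ≤ ‖∑ i, Real.exp (lam * u i x) •
            (Real.sqrt (dotProduct (fun j => gradient (u i) x j)
                ((G x)⁻¹ *ᵥ fun j => gradient (u i) x j)) •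
              (‖gradient (u i) x‖⁻¹ • gradient (u i) x))‖ := by
  classical
  set Ω : Set (EuclideanSpace ℝ (Fin n)) := {x | ∀ i, u i x ≤ 0} with hΩdef
  -- Ω is compact
  have hΩ_closed : IsClosed Ω := by
    have h : Ω = ⋂ i, (u i) ⁻¹' Set.Iic 0 := by
      ext y; simp [hΩdef, Set.mem_iInter]
    rw [h]
    exact isClosed_iInter fun i => IsClosed.preimage (hu_smooth i).continuous isClosed_Iic
  have hΩ_cpt : IsCompact Ω := Metric.isCompact_of_isClosed_isBounded hΩ_closed hΩ_bdd
  -- interior point and inscribed closed ball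
  obtain ⟨p, hp⟩ := hΩ_int
  obtain ⟨ε, hεpos, hball⟩ := Metric.isOpen_iff.1 isOpen_interior p hp
  set r := ε / 2 with hrdef
  have hrpos : 0 < r := by positivity
  have hballΩ : Metric.closedBall p r ⊆ Ω := by
    intro y hy
    refine interior_subset (hball ?_)
    rw [Metric.mem_ball]
    rw [Metric.mem_closedBall] at hy
    linarith
  have hpΩ : p ∈ Ω := interior_subset hp
  -- gradient continuity
  have hgc : ∀ i, Continuous fun y => gradient (u i) y := fun i => gradCont' (hu_smooth i)
  -- abbreviations
  set w : I → EuclideanSpace ℝ (Fin n) → ℝ := fun i x =>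
    Real.sqrt (dotProduct (fun j => gradient (u i) x j)
      ((G x)⁻¹ *ᵥ fun j => gradient (u i) x j)) with hwdef
  set N : I → EuclideanSpace ℝ (Fin n) → EuclideanSpace ℝ (Fin n) := fun i x =>
    ‖gradient (u i) x‖⁻¹ • gradient (u i) x with hNdef
  set f : I → EuclideanSpace ℝ (Fin n) → ℝ := fun i x => ⟪x - p, N i x⟫ with hfdef
  -- N is a unit vector on Ω
  have hN1 : ∀ i, ∀ x ∈ Ω, ‖N i x‖ = 1 := by
    intro i x hx
    have hg := hgrad_ne i x hx
    simp only [hNdef, norm_smul, norm_inv, norm_norm]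
    rw [inv_mul_cancel₀ (norm_ne_zero_iff.2 hg)]
  -- boundary claim : if u i x = 0 on Ω then f i x ≥ r
  have hbdry : ∀ i, ∀ x ∈ Ω, u i x = 0 → r ≤ f i x := by
    intro i x hx hux
    have hg0 : gradient (u i) x ≠ 0 := hgrad_ne i x hx
    have hgnorm : (0:ℝ) < ‖gradient (u i) x‖ := norm_pos_iff.2 hg0
    have hyΩ : p + r • N i x ∈ Ω := by
      apply hballΩ
      rw [Metric.mem_closedBall, dist_eq_norm]
      have h1 : p + r • N i x - p = r • N i x := by abel
      rw [h1, norm_smul, hN1 i x hx]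
      simp [abs_of_pos hrpos]
    set v := (p + r • N i x) - x with hv
    have hseg : ∀ t ∈ Set.Ioc (0:ℝ) 1, u i (x + t • v) ≤ u i (x + (0:ℝ) • v) := by
      intro t ht
      have hmem : x + t • v ∈ Ω := by
        have h2 : x + t • v = (1 - t) • x + t • (p + r • N i x) := by
          rw [hv]; module
        rw [h2]
        exact hΩ_conv hx hyΩ (by linarith [ht.2]) (le_of_lt ht.1) (by ring)
      have h3 : x + (0:ℝ) • v = x := by simp
      rw [h3, hux]
      exact hmem i
    have hd : ⟪gradient (u i) x, v⟫ ≤ 0 :=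
      derivNonpos' (lineDeriv' (hu_smooth i) x v) hseg
    have hinner : ⟪gradient (u i) x, v⟫
        = ⟪gradient (u i) x, p - x⟫ + r * ‖gradient (u i) x‖ := by
      rw [hv]
      have h3 : p + r • N i x - x = (p - x) + r • N i x := by abel
      rw [h3, inner_add_right, real_inner_smul_right]
      congr 1
      simp only [hNdef]
      rw [real_inner_smul_right, real_inner_self_eq_norm_mul_norm]
      field_simp
    have h4 : r * ‖gradient (u i) x‖ ≤ ⟪gradient (u i) x, x - p⟫ := by
      have h5 : ⟪gradient (u i) x, p - x⟫ = -⟪gradient (u i) x, x - p⟫ := by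
        rw [show p - x = -(x - p) by abel, inner_neg_right]
      rw [hinner, h5] at hd
      linarith
    have h6 : f i x = ‖gradient (u i) x‖⁻¹ * ⟪gradient (u i) x, x - p⟫ := by
      simp only [hfdef, hNdef]
      rw [real_inner_smul_right, real_inner_comm]
    rw [h6]
    have h7 := mul_le_mul_of_nonneg_left h4 (inv_nonneg.2 hgnorm.le)
    calc r = ‖gradient (u i) x‖⁻¹ * (r * ‖gradient (u i) x‖) := by
            field_simp
      _ ≤ _ := h7
  -- continuity of w
  have hGc : Continuous G := continuous_matrix fun i j => (hG_smooth i j).continuous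
  have hdet_ne : ∀ y, (G y).det ≠ 0 := fun y => ne_of_gt (hG_pd y).det_pos
  have hinv_eq : (fun y => (G y)⁻¹) = fun y => ((G y).det)⁻¹ • (G y).adjugate :=
    funext fun y => by rw [Matrix.inv_def, Ring.inverse_eq_inv']
  have hinvc : Continuous fun y => (G y)⁻¹ := by
    rw [hinv_eq]
    exact (hGc.matrix_det.inv₀ hdet_ne).smul hGc.matrix_adjugate
  have hgvc : ∀ i, Continuous fun y => (fun j => gradient (u i) y j) := by
    intro i
    exact continuous_pi fun j => (EuclideanSpace.proj j).continuous.comp (hgc i)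
  have hwc : ∀ i, Continuous (w i) := by
    intro i
    simp only [hwdef]
    exact Real.continuous_sqrt.comp ((hgvc i).dotProduct (hinvc.matrix_mulVec (hgvc i)))
  -- positivity of w on Ω
  have hqpos : ∀ i, ∀ x ∈ Ω, 0 < dotProduct (fun j => gradient (u i) x j)
      ((G x)⁻¹ *ᵥ fun j => gradient (u i) x j) := by
    intro i x hx
    have hg0 : gradient (u i) x ≠ 0 := hgrad_ne i x hx
    have hv : (fun j => gradient (u i) x j) ≠ 0 := by
      intro hzero
      apply hg0
      ext j; simpa using congrFun hzero j
    have h := ((hG_pd x).inv).dotProduct_mulVec_pos hv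
    simpa using h
  have hwpos : ∀ i, ∀ x ∈ Ω, 0 < w i x := by
    intro i x hx
    simp only [hwdef]
    exact Real.sqrt_pos.2 (hqpos i x hx)
  -- continuity of f on Ω
  have hfc : ∀ i, ContinuousOn (f i) Ω := by
    intro i
    simp only [hfdef, hNdef]
    exact ContinuousOn.inner ((continuous_id.sub continuous_const).continuousOn)
      (ContinuousOn.smul (((hgc i).norm.continuousOn).inv₀
        fun x hx => norm_ne_zero_iff.2 (hgrad_ne i x hx)) (hgc i).continuousOn)
  -- bound on |f|
  have hfbound : ∀ i, ∀ x ∈ Ω, |f i x| ≤ ‖x - p‖ := by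
    intro i x hx
    simp only [hfdef]
    calc |⟪x - p, N i x⟫| ≤ ‖x - p‖ * ‖N i x‖ := abs_real_inner_le_norm _ _
      _ = ‖x - p‖ := by rw [hN1 i x hx, mul_one]
  -- diameter bound D
  obtain ⟨R, hR⟩ := hΩ_bdd.subset_closedBall p
  set D := max R r with hDdef
  have hDpos : 0 < D := lt_of_lt_of_le hrpos (le_max_right _ _)
  have hD : ∀ x ∈ Ω, ‖x - p‖ ≤ D := by
    intro x hx
    have h := hR hx
    rw [Metric.mem_closedBall] at h
    rw [← dist_eq_norm]
    exact le_trans h (le_max_left _ _)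
  have hΩne : Ω.Nonempty := ⟨p, hpΩ⟩
  -- lower bound c for w on Ω
  have hkeyc : ∀ i, ∃ ci, 0 < ci ∧ ∀ x ∈ Ω, ci ≤ w i x := by
    intro i
    obtain ⟨x0, hx0, hmin⟩ := hΩ_cpt.exists_isMinOn hΩne (hwc i).continuousOn
    exact ⟨w i x0, hwpos i x0 hx0, fun x hx => hmin hx⟩
  choose cs hcs_pos hcs using hkeyc
  set c := Finset.univ.inf' Finset.univ_nonempty cs with hcdef
  have hcpos : 0 < c := (Finset.lt_inf'_iff _).2 fun i _ => hcs_pos i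
  have hcle : ∀ i, ∀ x ∈ Ω, c ≤ w i x := fun i x hx =>
    le_trans (Finset.inf'_le _ (Finset.mem_univ i)) (hcs i x hx)
  -- upper bound M for w on Ω
  have hkeyM : ∀ i, ∃ Mi, ∀ x ∈ Ω, w i x ≤ Mi := by
    intro i
    obtain ⟨x0, hx0, hmax⟩ := hΩ_cpt.exists_isMaxOn hΩne (hwc i).continuousOn
    exact ⟨w i x0, fun x hx => hmax hx⟩
  choose Ms hMs using hkeyM
  set M := max 1 (Finset.univ.sup' Finset.univ_nonempty Ms) with hMdef
  have hMpos : 0 < M := lt_of_lt_of_le one_pos (le_max_left _ _)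
  have hMle : ∀ i, ∀ x ∈ Ω, w i x ≤ M := fun i x hx =>
    le_trans (hMs i x hx) (le_trans (Finset.le_sup' _ (Finset.mem_univ i)) (le_max_right _ _))
  -- the δ quantity
  have hkeyδ : ∀ i, ∃ δi, 0 < δi ∧ ∀ x ∈ Ω, -δi < u i x → r/2 ≤ f i x := by
    intro i
    set K := Ω ∩ f i ⁻¹' Set.Iic (r/2) with hKdef
    have hKcl : IsClosed K := (hfc i).preimage_isClosed_of_isClosed hΩ_closed isClosed_Iic
    have hKcpt : IsCompact K := hΩ_cpt.of_isClosed_subset hKcl Set.inter_subset_left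
    rcases K.eq_empty_or_nonempty with hKe | hKne
    · refine ⟨1, one_pos, fun x hx hux => ?_⟩
      by_contra hcon
      have hxK : x ∈ K := ⟨hx, le_of_not_ge hcon⟩
      rw [hKe] at hxK
      exact Set.notMem_empty x hxK
    · obtain ⟨x0, hx0K, hmax⟩ := hKcpt.exists_isMaxOn hKne (hu_smooth i).continuous.continuousOn
      have hx0Ω : x0 ∈ Ω := hx0K.1
      have hneg : u i x0 < 0 := by
        rcases lt_or_eq_of_le (hx0Ω i) with h | h
        · exact h
        · exfalso
          have h1 := hbdry i x0 hx0Ω h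
          have h2 : f i x0 ≤ r/2 := hx0K.2
          linarith
      refine ⟨-u i x0, by linarith, fun x hx hux => ?_⟩
      by_contra hcon
      have hxK : x ∈ K := ⟨hx, le_of_not_ge hcon⟩
      have h3 : u i x ≤ u i x0 := hmax hxK
      rw [neg_neg] at hux
      linarith
  choose δs hδs_pos hδs using hkeyδ
  set δ := Finset.univ.inf' Finset.univ_nonempty δs with hδdef
  have hδpos : 0 < δ := (Finset.lt_inf'_iff _).2 fun i _ => hδs_pos i
  have hδ : ∀ i, ∀ x ∈ Ω, -δ < u i x → r/2 ≤ f i x := by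
    intro i x hx h
    refine hδs i x hx (lt_of_le_of_lt ?_ h)
    have h2 : δ ≤ δs i := Finset.inf'_le _ (Finset.mem_univ i)
    linarith
  -- the constants
  set m := (Fintype.card I : ℝ) with hmdef
  have hm1 : 1 ≤ m := by
    rw [hmdef]
    exact_mod_cast Fintype.card_pos
  have hmpos : 0 < m := lt_of_lt_of_le one_pos hm1
  set Kc := min (1/2 : ℝ) (c*r/(8*M*D)) with hKcdef
  have hKpos : 0 < Kc := lt_min (by norm_num) (by positivity)
  have hKhalf : Kc ≤ 1/2 := min_le_left _ _
  have hKMD : Kc * (M*D) ≤ c*r/8 := by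
    have h := min_le_right (1/2 : ℝ) (c*r/(8*M*D))
    calc Kc * (M*D) ≤ (c*r/(8*M*D)) * (M*D) :=
          mul_le_mul_of_nonneg_right h (by positivity)
      _ = c*r/8 := by field_simp
  refine ⟨max 1 (-Real.log (Kc/m)/δ), le_max_left _ _, (c*r/(8*D))⁻¹, by positivity, ?_⟩
  intro lam hlam x hx1
  have hlam1 : 1 ≤ lam := le_trans (le_max_left _ _) hlam
  have hlampos : 0 < lam := lt_of_lt_of_le one_pos hlam1
  have hexp : Real.exp (-(lam*δ)) ≤ Kc/m := by
    have h1 : -Real.log (Kc/m)/δ ≤ lam := le_trans (le_max_right _ _) hlam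
    have h2 : -Real.log (Kc/m) ≤ lam * δ := by
      rw [div_le_iff₀ hδpos] at h1
      linarith
    have h3 : -(lam*δ) ≤ Real.log (Kc/m) := by linarith
    calc Real.exp (-(lam*δ)) ≤ Real.exp (Real.log (Kc/m)) := Real.exp_le_exp.2 h3
      _ = Kc/m := Real.exp_log (by positivity)
  set θ : I → ℝ := fun i => Real.exp (lam * u i x) with hθdef
  have hθpos : ∀ i, 0 < θ i := fun i => Real.exp_pos _
  have hθle1 : ∀ i, θ i ≤ 1 := by
    intro i
    calc θ i ≤ ∑ j, θ j :=
          Finset.single_le_sum (fun j _ => (hθpos j).le) (Finset.mem_univ i)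
      _ = 1 := hx1
  have hxΩ : x ∈ Ω := by
    simp only [hΩdef, Set.mem_setOf_eq]
    intro i
    have h1 := hθle1 i
    simp only [hθdef] at h1
    have h2 : lam * u i x ≤ 0 := Real.exp_le_one_iff.1 h1
    nlinarith
  rw [inv_inv]
  show c*r/(8*D) ≤ ‖∑ i, θ i • (w i x • N i x)‖
  set S := ∑ i, θ i • (w i x • N i x) with hSdef
  have hT : ⟪x - p, S⟫ = ∑ i, θ i * (w i x * f i x) := by
    rw [hSdef, inner_sum]
    refine Finset.sum_congr rfl fun i _ => ?_
    rw [real_inner_smul_right, real_inner_smul_right]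
  set A := Finset.univ.filter (fun i => -δ < u i x) with hAdef
  set B := Finset.univ.filter (fun i => ¬(-δ < u i x)) with hBdef
  have hsplit : ∀ (F : I → ℝ), ∑ i, F i = ∑ i ∈ A, F i + ∑ i ∈ B, F i := fun F =>
    (Finset.sum_filter_add_sum_filter_not _ _ _).symm
  have hθB : ∀ i ∈ B, θ i ≤ Kc/m := by
    intro i hi
    rw [hBdef, Finset.mem_filter] at hi
    have h1 : u i x ≤ -δ := not_lt.1 hi.2
    have h2 : lam * u i x ≤ -(lam*δ) := by nlinarith
    have h4 : θ i = Real.exp (lam * u i x) := rfl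
    rw [h4]
    calc Real.exp (lam * u i x) ≤ Real.exp (-(lam*δ)) := Real.exp_le_exp.2 h2
      _ ≤ Kc/m := hexp
  have hcardB : (B.card : ℝ) ≤ m := by
    rw [hmdef]
    exact_mod_cast Finset.card_filter_le _ _
  have hsumθB : ∑ i ∈ B, θ i ≤ Kc := by
    calc ∑ i ∈ B, θ i ≤ ∑ _i ∈ B, (Kc/m) := Finset.sum_le_sum hθB
      _ = B.card * (Kc/m) := by rw [Finset.sum_const, nsmul_eq_mul]
      _ ≤ m * (Kc/m) := mul_le_mul_of_nonneg_right hcardB (by positivity)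
      _ = Kc := by field_simp
  have hsumθA : 1 - Kc ≤ ∑ i ∈ A, θ i := by
    have h0 := hsplit θ
    rw [hx1] at h0
    linarith
  have htA : ∀ i ∈ A, θ i * (c * (r/2)) ≤ θ i * (w i x * f i x) := by
    intro i hi
    rw [hAdef, Finset.mem_filter] at hi
    have hf2 := hδ i x hxΩ hi.2
    have hwx := hcle i x hxΩ
    have h1 : c * (r/2) ≤ w i x * f i x := by nlinarith
    exact mul_le_mul_of_nonneg_left h1 (hθpos i).le
  have htB : ∀ i ∈ B, -(Kc/m * (M*D)) ≤ θ i * (w i x * f i x) := by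
    intro i hi
    have hθi := hθB i hi
    have hfD : |f i x| ≤ D := le_trans (hfbound i x hxΩ) (hD x hxΩ)
    have hw0 : 0 ≤ w i x := le_trans hcpos.le (hcle i x hxΩ)
    have hwM := hMle i x hxΩ
    have habs : |θ i * (w i x * f i x)| ≤ Kc/m * (M*D) := by
      rw [abs_mul, abs_mul, abs_of_pos (hθpos i), abs_of_nonneg hw0]
      refine mul_le_mul hθi ?_ (mul_nonneg hw0 (abs_nonneg _)) (by positivity)
      exact mul_le_mul hwM hfD (abs_nonneg _) hMpos.le
    linarith [neg_abs_le (θ i * (w i x * f i x))]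
  have hTbound : c*r/8 ≤ ⟪x - p, S⟫ := by
    rw [hT, hsplit (fun i => θ i * (w i x * f i x))]
    have h1 : (c * (r/2)) * ∑ i ∈ A, θ i ≤ ∑ i ∈ A, θ i * (w i x * f i x) := by
      rw [Finset.mul_sum]
      refine Finset.sum_le_sum fun i hi => ?_
      rw [mul_comm (c * (r/2)) (θ i)]
      exact htA i hi
    have h2a : ∑ _i ∈ B, (-(Kc/m * (M*D))) ≤ ∑ i ∈ B, θ i * (w i x * f i x) :=
      Finset.sum_le_sum htB
    have h2b : ∑ _i ∈ B, (-(Kc/m * (M*D))) = -(B.card * (Kc/m * (M*D))) := by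
      rw [Finset.sum_const, nsmul_eq_mul]; ring
    have h2c : -(m * (Kc/m * (M*D))) ≤ -(B.card * (Kc/m * (M*D))) :=
      neg_le_neg (mul_le_mul_of_nonneg_right hcardB (by positivity))
    have h2d : m * (Kc/m * (M*D)) = Kc * (M*D) := by field_simp
    have h3 : (c * (r/2)) * (1 - Kc) ≤ (c * (r/2)) * ∑ i ∈ A, θ i :=
      mul_le_mul_of_nonneg_left hsumθA (by positivity)
    have h4 : (c * (r/2)) * Kc ≤ (c * (r/2)) * (1/2) :=
      mul_le_mul_of_nonneg_left hKhalf (by positivity)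
    nlinarith [h1, h2a, h2b, h2c, h2d, h3, h4, hKMD]
  have hcs2 : ⟪x - p, S⟫ ≤ ‖x - p‖ * ‖S‖ := real_inner_le_norm _ _
  have h6 : ‖x - p‖ * ‖S‖ ≤ D * ‖S‖ :=
    mul_le_mul_of_nonneg_right (hD x hxΩ) (norm_nonneg _)
  have h7 : c*r/8 ≤ D * ‖S‖ := by linarith
  rw [show c*r/(8*D) = (c*r/8)/D by ring, div_le_iff₀ hDpos]
  linarith
end

section
/- There exists λ₀ > 0 such that for every λ ≥ λ₀: (1) Ω_λ is nonempty; (2) Ω_λ ⊆ Ω, and Ω_λ is compact; (3) 1 is a regular value of F_λ, i.e. for every x with F_λ(x) = 1 the Euclidean gradient ∑_{i∈I} λ e^{λ u_i(x)} ∇u_i(x) is nonzero, so that Σ_λ = ∂Ω_λ is a smooth embedded hypersurface of ℝⁿ; and (4) if in addition each u_i is a convex function, then Ω_λ is convex. -/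
open Filter Set InnerProductSpace Finset
open scoped RealInnerProductSpace Topology

variable {E : Type*} [NormedAddCommGroup E] [InnerProductSpace ℝ E] [CompleteSpace E]

/-- Derivative of `f` along a line, in terms of a gradient. -/
lemma lineDeriv_of_gradient {f : E → ℝ} {g x : E} (hf : HasGradientAt f g x) (d : E) :
    HasDerivAt (fun t : ℝ => f (x + t • d)) ⟪g, d⟫_ℝ 0 := by
  have hc : HasDerivAt (fun t : ℝ => x + t • d) d 0 := by
    simpa using ((hasDerivAt_id (0 : ℝ)).smul_const d).const_add x
  have := hf.hasFDerivAt.comp_hasDerivAt_of_eq (0:ℝ) hc (by simp)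
  simp only [InnerProductSpace.toDual_apply_apply] at this
  exact this

lemma eventually_gt_of_hasDerivAt_pos {φ : ℝ → ℝ} {c : ℝ} (h : HasDerivAt φ c 0)
    (hc : 0 < c) : ∀ᶠ t in 𝓝[>] (0 : ℝ), φ 0 < φ t := by
  have h1 : Tendsto (slope φ 0) (𝓝[≠] 0) (𝓝 c) := hasDerivAt_iff_tendsto_slope.1 h
  have h2 : Tendsto (slope φ 0) (𝓝[>] 0) (𝓝 c) :=
    h1.mono_left (nhdsWithin_mono _ (fun t ht => ne_of_gt ht))
  filter_upwards [h2.eventually (eventually_gt_nhds hc), self_mem_nhdsWithin] with t h4 ht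
  have ht0 : (0:ℝ) < t := ht
  rw [slope_def_field] at h4
  have := mul_pos h4 ht0
  rw [sub_zero, div_mul_cancel₀] at this
  · linarith
  · exact ne_of_gt ht0

lemma deriv_nonpos_of_eventually_le {φ : ℝ → ℝ} {c : ℝ} (h : HasDerivAt φ c 0)
    (hb : ∀ᶠ t in 𝓝[>] (0 : ℝ), φ t ≤ φ 0) : c ≤ 0 := by
  by_contra hc
  obtain ⟨t, h1, h2⟩ := ((eventually_gt_of_hasDerivAt_pos h (lt_of_not_ge hc)).and hb).exists
  linarith

/-- boundary normal inequality -/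
lemma inner_grad_nonpos {Ω : Set E} (hconv : Convex ℝ Ω) {f : E → ℝ}
    (hf : Differentiable ℝ f) (hneg : ∀ y ∈ Ω, f y ≤ 0) {x : E} (hx : x ∈ Ω)
    (hfx : f x = 0) {q : E} (hq : q ∈ Ω) : ⟪gradient f x, q - x⟫_ℝ ≤ 0 := by
  apply deriv_nonpos_of_eventually_le (lineDeriv_of_gradient (hf x).hasGradientAt (q - x))
  filter_upwards [Ioo_mem_nhdsGT (zero_lt_one)] with t ht
  have hmem : x + t • (q - x) ∈ Ω := by
    have := hconv hx hq (by linarith [ht.2] : (0:ℝ) ≤ 1 - t) (le_of_lt ht.1) (by ring)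
    convert this using 1
    simp [smul_sub]
    module
  simp only [zero_smul, add_zero]
  rw [hfx]
  exact hneg _ hmem

set_option maxHeartbeats 1000000 in
/-- For a convex Riemannian polytope type domain
`Ω = ⋂ i, {u i ≤ 0}` in `ℝⁿ` (`n ≥ 2`), with `F_λ(x) := ∑ i, exp (λ * u i x)`,
`Ω_λ := {F_λ ≤ 1}` and `Σ_λ := {F_λ = 1}`, there exists `λ₀ > 0` such that for
every `λ ≥ λ₀`:
(1) `Ω_λ` is nonempty; (2) `Ω_λ ⊆ Ω` and `Ω_λ` is compact;
(3) `1` is a regular value of `F_λ` (the Euclidean gradient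
`∑ i, λ e^{λ u_i} ∇u_i` is nonzero on `Σ_λ`), so that `Σ_λ` is the topological
boundary of `Ω_λ`; (4) if moreover each `u i` is convex then `Ω_λ` is convex. -/
theorem smoothing_domain_properties
    {n : ℕ} (hn : 2 ≤ n) (I : Type) [Fintype I] [Nonempty I]
    (u : I → EuclideanSpace ℝ (Fin n) → ℝ)
    (hu_smooth : ∀ i, ContDiff ℝ (⊤ : ℕ∞) (u i))
    (hu_reg : ∀ i x, u i x = 0 → gradient (u i) x ≠ 0)
    (hΩ_bdd : Bornology.IsBounded {x : EuclideanSpace ℝ (Fin n) | ∀ i, u i x ≤ 0})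
    (hΩ_conv : Convex ℝ {x : EuclideanSpace ℝ (Fin n) | ∀ i, u i x ≤ 0})
    (hΩ_int : (interior {x : EuclideanSpace ℝ (Fin n) | ∀ i, u i x ≤ 0}).Nonempty) :
    ∃ lam₀ : ℝ, 0 < lam₀ ∧
      ∀ lam : ℝ, lam₀ ≤ lam →
        ({x : EuclideanSpace ℝ (Fin n) | (∑ i, Real.exp (lam * u i x)) ≤ 1}.Nonempty) ∧
        ({x : EuclideanSpace ℝ (Fin n) | (∑ i, Real.exp (lam * u i x)) ≤ 1}
          ⊆ {x : EuclideanSpace ℝ (Fin n) | ∀ i, u i x ≤ 0}) ∧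
        IsCompact {x : EuclideanSpace ℝ (Fin n) | (∑ i, Real.exp (lam * u i x)) ≤ 1} ∧
        (∀ x : EuclideanSpace ℝ (Fin n), (∑ i, Real.exp (lam * u i x)) = 1 →
          (∑ i, (lam * Real.exp (lam * u i x)) • gradient (u i) x) ≠ 0) ∧
        (frontier {x : EuclideanSpace ℝ (Fin n) | (∑ i, Real.exp (lam * u i x)) ≤ 1}
          = {x : EuclideanSpace ℝ (Fin n) | (∑ i, Real.exp (lam * u i x)) = 1}) ∧
        ((∀ i, ConvexOn ℝ Set.univ (u i)) →
          Convex ℝ {x : EuclideanSpace ℝ (Fin n) | (∑ i, Real.exp (lam * u i x)) ≤ 1}) := by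
  classical
  set Ω : Set (EuclideanSpace ℝ (Fin n)) := {x | ∀ i, u i x ≤ 0} with hΩdef
  -- Ω is compact
  have hΩclosed : IsClosed Ω := by
    have : Ω = ⋂ i, (u i) ⁻¹' Set.Iic 0 := by ext x; simp [hΩdef, Set.mem_iInter]
    rw [this]
    exact isClosed_iInter fun i => isClosed_Iic.preimage (hu_smooth i).continuous
  have hΩcpt : IsCompact Ω := Metric.isCompact_of_isClosed_isBounded hΩclosed hΩ_bdd
  -- interior ball
  obtain ⟨p, hp⟩ := hΩ_int
  obtain ⟨r0, hr0, hball⟩ := Metric.isOpen_iff.1 isOpen_interior p hp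
  set r : ℝ := r0 / 2 with hrdef
  have hrpos : 0 < r := by positivity
  have hcball : ∀ y ∈ Metric.closedBall p r, y ∈ Ω := by
    intro y hy
    exact interior_subset (hball (lt_of_le_of_lt (Metric.mem_closedBall.1 hy) (by linarith)))
  have hpΩ : p ∈ Ω := interior_subset hp
  -- continuity of gradients
  have hgradcont : ∀ i, Continuous (fun x => gradient (u i) x) := by
    intro i
    have h1 : Continuous (fderiv ℝ (u i)) := (hu_smooth i).continuous_fderiv (by simp)
    exact (InnerProductSpace.toDual ℝ (EuclideanSpace ℝ (Fin n))).symm.continuous.comp h1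
  -- key inequality
  have hkey : ∀ i x, x ∈ Ω → u i x = 0 → ∀ q ∈ Ω, ⟪gradient (u i) x, q - x⟫_ℝ ≤ 0 :=
    fun i x hx hx0 q hq =>
      inner_grad_nonpos hΩ_conv ((hu_smooth i).differentiable (by simp))
        (fun y hy => hy i) hx hx0 hq
  -- lower bound on normal at exact boundary
  have hGpos0 : ∀ i x, x ∈ Ω → u i x = 0 →
      r * ‖gradient (u i) x‖ ≤ ⟪gradient (u i) x, x - p⟫_ℝ := by
    intro i x hx hx0
    set g := gradient (u i) x with hgdef
    have hg : g ≠ 0 := hu_reg i x hx0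
    have hgn : 0 < ‖g‖ := norm_pos_iff.2 hg
    have hq : p + (r / ‖g‖) • g ∈ Ω := by
      apply hcball
      rw [Metric.mem_closedBall, dist_eq_norm]
      have : p + (r / ‖g‖) • g - p = (r / ‖g‖) • g := by abel
      rw [this, norm_smul, Real.norm_eq_abs, abs_of_pos (by positivity)]
      rw [div_mul_cancel₀ _ (ne_of_gt hgn)]
    have h1 := hkey i x hx hx0 _ hq
    have h2 : p + (r / ‖g‖) • g - x = (p - x) + (r / ‖g‖) • g := by abel
    rw [h2, inner_add_right, real_inner_smul_right, real_inner_self_eq_norm_sq] at h1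
    have h3 : r / ‖g‖ * ‖g‖ ^ 2 = r * ‖g‖ := by
      field_simp
    rw [h3] at h1
    have h4 : ⟪g, x - p⟫_ℝ = - ⟪g, p - x⟫_ℝ := by
      rw [← inner_neg_right]
      congr 1
      abel
    rw [h4]
    linarith
  -- u i p < 0
  have hup : ∀ i, u i p < 0 := by
    intro i
    rcases lt_or_eq_of_le (hpΩ i) with h | h
    · exact h
    exfalso
    have h1 := hGpos0 i p hpΩ h
    rw [sub_self, inner_zero_right] at h1
    have hg : gradient (u i) p ≠ 0 := hu_reg i p h
    have hgn : 0 < ‖gradient (u i) p‖ := norm_pos_iff.2 hg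
    nlinarith
  -- δ
  set δ : ℝ := Finset.univ.inf' Finset.univ_nonempty (fun i => -(u i p)) with hδdef
  have hδpos : 0 < δ := by
    rw [hδdef, Finset.lt_inf'_iff]
    exact fun i _ => by linarith [hup i]
  have hδle : ∀ i, u i p ≤ -δ := by
    intro i
    have := Finset.inf'_le (f := fun i => -(u i p)) (Finset.mem_univ i)
    rw [← hδdef] at this
    linarith
  -- G function
  set G : I → EuclideanSpace ℝ (Fin n) → ℝ :=
    fun i x => ⟪gradient (u i) x, x - p⟫_ℝ with hGdef
  have hGcont : ∀ i, Continuous (G i) :=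
    fun i => (hgradcont i).inner (continuous_id.sub continuous_const)
  have hGbpos : ∀ i x, x ∈ Ω → u i x = 0 → 0 < G i x := by
    intro i x hx hx0
    have h1 := hGpos0 i x hx hx0
    have hgn : 0 < ‖gradient (u i) x‖ := norm_pos_iff.2 (hu_reg i x hx0)
    have : 0 < r * ‖gradient (u i) x‖ := by positivity
    rw [hGdef]
    dsimp only
    linarith
  -- ε per index
  have Hε : ∀ i, ∃ ε > (0:ℝ), ∀ x ∈ Ω, -ε ≤ u i x → 0 < G i x := by
    intro i
    set C : Set (EuclideanSpace ℝ (Fin n)) :=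
      Ω ∩ {x | -1 ≤ u i x} ∩ {x | G i x ≤ 0} with hCdef
    have hCcl : IsClosed C :=
      (hΩclosed.inter (isClosed_le continuous_const (hu_smooth i).continuous)).inter
        (isClosed_le (hGcont i) continuous_const)
    have hCcpt : IsCompact C :=
      hΩcpt.of_isClosed_subset hCcl (fun x hx => hx.1.1)
    rcases C.eq_empty_or_nonempty with hCe | hCne
    · refine ⟨1, one_pos, fun x hx hux => ?_⟩
      by_contra hG
      push_neg at hG
      have : x ∈ C := ⟨⟨hx, hux⟩, hG⟩
      rw [hCe] at this
      exact this
    · obtain ⟨x₀, hx₀C, hx₀max⟩ :=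
        hCcpt.exists_isMaxOn hCne (hu_smooth i).continuous.continuousOn
      have hux₀ : u i x₀ < 0 := by
        rcases lt_or_eq_of_le (hx₀C.1.1 i) with h | h
        · exact h
        · exact absurd (hGbpos i x₀ hx₀C.1.1 h) (not_lt.2 hx₀C.2)
      refine ⟨min 1 (-(u i x₀) / 2), lt_min one_pos (by linarith), fun x hx hux => ?_⟩
      by_contra hG
      push_neg at hG
      have hmem1 : (-1:ℝ) ≤ u i x :=
        le_trans (neg_le_neg (min_le_left 1 (-(u i x₀) / 2))) hux
      have hxC : x ∈ C := ⟨⟨hx, hmem1⟩, hG⟩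
      have h2 : u i x ≤ u i x₀ := isMaxOn_iff.1 hx₀max x hxC
      have h3 : min 1 (-(u i x₀) / 2) ≤ -(u i x₀) / 2 := min_le_right _ _
      linarith
  choose εf hεf0 hεf using Hε
  set ε : ℝ := Finset.univ.inf' Finset.univ_nonempty εf with hεdef
  have hεpos : 0 < ε := by
    rw [hεdef, Finset.lt_inf'_iff]
    exact fun i _ => hεf0 i
  have hεle : ∀ i, ε ≤ εf i := by
    intro i
    have := Finset.inf'_le (f := εf) (Finset.mem_univ i)
    rw [← hεdef] at this
    exact this
  have hGε : ∀ i, ∀ x ∈ Ω, -ε ≤ u i x → 0 < G i x :=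
    fun i x hx h => hεf i x hx (le_trans (neg_le_neg (hεle i)) h)
  -- c per index
  have Hc : ∀ i, ∃ c > (0:ℝ), ∀ x ∈ Ω, -ε ≤ u i x → c ≤ G i x := by
    intro i
    set D : Set (EuclideanSpace ℝ (Fin n)) := Ω ∩ {x | -ε ≤ u i x} with hDdef
    have hDcpt : IsCompact D :=
      hΩcpt.of_isClosed_subset
        (hΩclosed.inter (isClosed_le continuous_const (hu_smooth i).continuous))
        (fun x hx => hx.1)
    rcases D.eq_empty_or_nonempty with hDe | hDne
    · refine ⟨1, one_pos, fun x hx hux => absurd (show x ∈ D from ⟨hx, hux⟩) ?_⟩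
      rw [hDe]
      exact notMem_empty x
    · obtain ⟨x₀, hx₀, hmin⟩ := hDcpt.exists_isMinOn hDne (hGcont i).continuousOn
      exact ⟨G i x₀, hGε i x₀ hx₀.1 hx₀.2,
        fun x hx hux => isMinOn_iff.1 hmin x ⟨hx, hux⟩⟩
  choose cf hcf0 hcf using Hc
  set c : ℝ := Finset.univ.inf' Finset.univ_nonempty cf with hcdef
  have hcpos : 0 < c := by
    rw [hcdef, Finset.lt_inf'_iff]
    exact fun i _ => hcf0 i
  clear_value δ ε
  have hGc : ∀ i, ∀ x ∈ Ω, -ε ≤ u i x → c ≤ G i x := by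
    intro i x hx hux
    have h1 := Finset.inf'_le (f := cf) (Finset.mem_univ i)
    rw [← hcdef] at h1
    exact le_trans h1 (hcf i x hx hux)
  -- M bound
  have HM : ∀ i, ∃ M, ∀ x ∈ Ω, ‖G i x‖ ≤ M :=
    fun i => hΩcpt.exists_bound_of_continuousOn (hGcont i).continuousOn
  choose Mf hMf using HM
  set M : ℝ := max 1 (Finset.univ.sup' Finset.univ_nonempty Mf) with hMdef
  have hM1 : 1 ≤ M := le_max_left _ _
  have hM0 : 0 < M := lt_of_lt_of_le one_pos hM1
  have hGM : ∀ i x, x ∈ Ω → -M ≤ G i x := by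
    intro i x hx
    have h1 := hMf i x hx
    rw [Real.norm_eq_abs] at h1
    have h2 : Mf i ≤ M :=
      le_trans (Finset.le_sup' (f := Mf) (Finset.mem_univ i)) (le_max_right _ _)
    have := abs_le.1 h1
    linarith [this.1]
  clear_value c M
  -- N
  set N : ℝ := (Fintype.card I : ℝ) with hNdef
  have hN1 : 1 ≤ N := by
    rw [hNdef]
    exact_mod_cast Fintype.card_pos
  have hN0 : 0 < N := lt_of_lt_of_le one_pos hN1
  -- choose lam₀
  refine ⟨max (max 1 (Real.log N / δ)) (max (Real.log N / ε)
      ((Real.log (N ^ 2 * M / c) + 1) / ε)), ?_, ?_⟩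
  · exact lt_of_lt_of_le one_pos (le_trans (le_max_left _ _) (le_max_left _ _))
  intro lam hlam
  have hlam1 : 1 ≤ lam :=
    le_trans (le_trans (le_max_left _ _) (le_max_left _ _)) hlam
  have hlam0 : 0 < lam := lt_of_lt_of_le one_pos hlam1
  have hlamδ : Real.log N ≤ lam * δ := by
    have h1 : Real.log N / δ ≤ lam :=
      le_trans (le_trans (le_max_right _ _) (le_max_left _ _)) hlam
    rw [div_le_iff₀ hδpos] at h1
    linarith [h1]
  have hlamε : Real.log N ≤ lam * ε := by
    have h1 : Real.log N / ε ≤ lam :=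
      le_trans (le_trans (le_max_left _ _) (le_max_right _ _)) hlam
    rw [div_le_iff₀ hεpos] at h1
    linarith [h1]
  have hlamc : Real.log (N ^ 2 * M / c) + 1 ≤ lam * ε := by
    have h1 : (Real.log (N ^ 2 * M / c) + 1) / ε ≤ lam :=
      le_trans (le_trans (le_max_right _ _) (le_max_right _ _)) hlam
    rw [div_le_iff₀ hεpos] at h1
    linarith [h1]
  -- basic facts about the sublevel set
  set S : Set (EuclideanSpace ℝ (Fin n)) :=
    {x | (∑ i, Real.exp (lam * u i x)) ≤ 1} with hSdef
  have hFcont : Continuous (fun x : EuclideanSpace ℝ (Fin n) => ∑ i, Real.exp (lam * u i x)) :=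
    continuous_finset_sum _ fun i _ =>
      Real.continuous_exp.comp (continuous_const.mul (hu_smooth i).continuous)
  have hsub : S ⊆ Ω := by
    intro x hx i
    have h1 : Real.exp (lam * u i x) ≤ 1 :=
      le_trans (Finset.single_le_sum (fun j _ => (Real.exp_pos (lam * u j x)).le)
        (Finset.mem_univ i)) hx
    have h2 : lam * u i x ≤ 0 := Real.exp_le_one_iff.1 h1
    exact le_of_not_gt fun hpos => absurd h2 (not_le.2 (mul_pos hlam0 hpos))
  have hSclosed : IsClosed S := isClosed_le hFcont continuous_const
  have hScpt : IsCompact S :=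
    Metric.isCompact_of_isClosed_isBounded hSclosed (hΩ_bdd.subset hsub)
  have hSne : S.Nonempty := by
    refine ⟨p, ?_⟩
    have hstep : ∀ i, Real.exp (lam * u i p) ≤ Real.exp (-(lam * δ)) := by
      intro i
      apply Real.exp_le_exp.2
      have := mul_le_mul_of_nonneg_left (hδle i) hlam0.le
      linarith
    have hexp : Real.exp (-(lam * δ)) ≤ N⁻¹ := by
      rw [← Real.exp_log (show (0:ℝ) < N⁻¹ by positivity)]
      apply Real.exp_le_exp.2
      rw [Real.log_inv]
      linarith
    calc (∑ i, Real.exp (lam * u i p)) ≤ ∑ _i : I, Real.exp (-(lam * δ)) :=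
          Finset.sum_le_sum fun i _ => hstep i
      _ = N * Real.exp (-(lam * δ)) := by
          rw [Finset.sum_const, Finset.card_univ, nsmul_eq_mul, hNdef]
      _ ≤ N * N⁻¹ := by
          apply mul_le_mul_of_nonneg_left hexp (le_of_lt hN0)
      _ = 1 := mul_inv_cancel₀ (ne_of_gt hN0)
  -- core positivity of the inner product with x - p
  have hcore : ∀ x, (∑ i, Real.exp (lam * u i x)) = 1 →
      0 < ∑ i, Real.exp (lam * u i x) * G i x := by
    intro x hx1
    have hxΩ : x ∈ Ω := hsub (le_of_eq hx1)
    -- some index has a large weight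
    have hstar : ∃ i, N⁻¹ ≤ Real.exp (lam * u i x) := by
      by_contra h
      push_neg at h
      have h2 : (∑ i, Real.exp (lam * u i x)) < ∑ _i : I, N⁻¹ :=
        Finset.sum_lt_sum_of_nonempty Finset.univ_nonempty fun i _ => h i
      rw [hx1, Finset.sum_const, Finset.card_univ, nsmul_eq_mul, ← hNdef,
        mul_inv_cancel₀ (ne_of_gt hN0)] at h2
      exact lt_irrefl 1 h2
    obtain ⟨i₀, hi₀⟩ := hstar
    have hui₀ : -ε ≤ u i₀ x := by
      have h1 : -(Real.log N) ≤ lam * u i₀ x := by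
        have h2 : Real.exp (-(Real.log N)) ≤ Real.exp (lam * u i₀ x) := by
          rw [Real.exp_neg, Real.exp_log hN0]
          exact hi₀
        exact Real.exp_le_exp.1 h2
      have h3 : lam * (-ε) ≤ lam * u i₀ x := by linarith [h1, hlamε]
      exact le_of_mul_le_mul_left (by linarith [h3]) hlam0
    -- termwise lower bounds
    have hterm : ∀ i, -(Real.exp (-(lam * ε)) * M) ≤ Real.exp (lam * u i x) * G i x := by
      intro i
      rcases le_or_gt (-ε) (u i x) with h | h
      · have h1 : 0 ≤ G i x := (hGε i x hxΩ h).le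
        have h2 : 0 ≤ Real.exp (lam * u i x) * G i x :=
          mul_nonneg (Real.exp_pos _).le h1
        have h3 : 0 ≤ Real.exp (-(lam * ε)) * M :=
          mul_nonneg (Real.exp_pos _).le hM0.le
        linarith
      · have h1 : Real.exp (lam * u i x) ≤ Real.exp (-(lam * ε)) :=
          Real.exp_le_exp.2 (by
            have := mul_le_mul_of_nonneg_left h.le hlam0.le
            linarith)
        have h2 : -M ≤ G i x := hGM i x hxΩ
        have hA : 0 ≤ Real.exp (lam * u i x) * (G i x + M) :=
          mul_nonneg (Real.exp_pos _).le (by linarith)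
        have hB : 0 ≤ M * (Real.exp (-(lam * ε)) - Real.exp (lam * u i x)) :=
          mul_nonneg hM0.le (sub_nonneg.2 h1)
        rw [mul_add] at hA
        rw [mul_sub] at hB
        linarith
    have htermstar : N⁻¹ * c ≤ Real.exp (lam * u i₀ x) * G i₀ x :=
      mul_le_mul hi₀ (hGc i₀ x hxΩ hui₀) hcpos.le (Real.exp_pos _).le
    -- sum lower bound
    have hsum : N⁻¹ * c - N * (Real.exp (-(lam * ε)) * M) ≤
        ∑ i, Real.exp (lam * u i x) * G i x := by
      have hsplit : (∑ i, Real.exp (lam * u i x) * G i x) =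
          Real.exp (lam * u i₀ x) * G i₀ x +
            ∑ i ∈ Finset.univ.erase i₀, Real.exp (lam * u i x) * G i x :=
        (Finset.add_sum_erase _ _ (Finset.mem_univ i₀)).symm
      have hrest : ((Finset.univ.erase i₀).card : ℝ) * (-(Real.exp (-(lam * ε)) * M)) ≤
          ∑ i ∈ Finset.univ.erase i₀, Real.exp (lam * u i x) * G i x := by
        calc ((Finset.univ.erase i₀).card : ℝ) * (-(Real.exp (-(lam * ε)) * M))
            = ∑ _i ∈ Finset.univ.erase i₀, (-(Real.exp (-(lam * ε)) * M)) := by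
              rw [Finset.sum_const, nsmul_eq_mul]
          _ ≤ _ := Finset.sum_le_sum fun i _ => hterm i
      have hcard : ((Finset.univ.erase i₀).card : ℝ) ≤ N := by
        rw [hNdef]
        exact_mod_cast Finset.card_le_card (Finset.erase_subset _ _) |>.trans
          (le_of_eq Finset.card_univ)
      have hnonneg : 0 ≤ Real.exp (-(lam * ε)) * M :=
        mul_nonneg (Real.exp_pos _).le hM0.le
      rw [hsplit]
      linarith [mul_le_mul_of_nonneg_right hcard hnonneg]
    -- strict positivity of the bound
    have hlt : N * (Real.exp (-(lam * ε)) * M) < N⁻¹ * c := by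
      have h1 : Real.exp (-(lam * ε)) < c / (N ^ 2 * M) := by
        have hq : (0:ℝ) < N ^ 2 * M / c := by positivity
        have h3 : Real.exp (-(lam * ε)) < Real.exp (-(Real.log (N ^ 2 * M / c))) :=
          Real.exp_lt_exp.2 (by linarith)
        have h5 : Real.exp (-(Real.log (N ^ 2 * M / c))) = c / (N ^ 2 * M) := by
          rw [Real.exp_neg, Real.exp_log hq, inv_div]
        linarith [h3, h5.symm.le, h5.le]
      have h6 : N * (Real.exp (-(lam * ε)) * M) < N * (c / (N ^ 2 * M) * M) := by
        apply mul_lt_mul_of_pos_left (mul_lt_mul_of_pos_right h1 hM0) hN0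
      have h7 : N * (c / (N ^ 2 * M) * M) = N⁻¹ * c := by
        field_simp
      linarith
    linarith
  -- the inner-product computation with the statement's gradient vector
  have hinnerEq : ∀ x : EuclideanSpace ℝ (Fin n),
      ⟪∑ i, (lam * Real.exp (lam * u i x)) • gradient (u i) x, x - p⟫_ℝ =
        lam * ∑ i, Real.exp (lam * u i x) * G i x := by
    intro x
    rw [sum_inner, Finset.mul_sum]
    apply Finset.sum_congr rfl
    intro i _
    rw [real_inner_smul_left]
    rw [hGdef]
    ring
  -- finish
  refine ⟨hSne, hsub, hScpt, ?_, ?_, ?_⟩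
  · -- regular value
    intro x hx1 heq
    have hpos : 0 < lam * ∑ i, Real.exp (lam * u i x) * G i x :=
      mul_pos hlam0 (hcore x hx1)
    have h2 := hinnerEq x
    rw [heq, inner_zero_left] at h2
    linarith
  · -- frontier
    apply Set.Subset.antisymm
    · intro x hx
      have hxcl : x ∈ S := by rw [← hSclosed.closure_eq]; exact hx.1
      have hle : (∑ i, Real.exp (lam * u i x)) ≤ 1 := hxcl
      rcases lt_or_eq_of_le hle with hlt | heq
      · exact absurd (interior_maximal (fun y hy => le_of_lt hy)
          (isOpen_lt hFcont continuous_const) hlt) hx.2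
      · exact heq
    · intro x hx1
      have hx1' : (∑ i, Real.exp (lam * u i x)) = 1 := hx1
      refine ⟨subset_closure (show x ∈ S from le_of_eq hx1'), ?_⟩
      intro hxint
      set v : EuclideanSpace ℝ (Fin n) :=
        ∑ i, (lam * Real.exp (lam * u i x)) • gradient (u i) x with hvdef
      have hv : HasGradientAt (fun y => ∑ i, Real.exp (lam * u i y)) v x := by
        rw [hasGradientAt_iff_hasFDerivAt]
        have hterm : ∀ i : I, HasFDerivAt (fun y => Real.exp (lam * u i y))
            ((lam * Real.exp (lam * u i x)) •
              (InnerProductSpace.toDual ℝ (EuclideanSpace ℝ (Fin n))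
                (gradient (u i) x))) x := by
          intro i
          have h1 : HasFDerivAt (u i)
              (InnerProductSpace.toDual ℝ (EuclideanSpace ℝ (Fin n))
                (gradient (u i) x)) x :=
            ((hu_smooth i).differentiable (by simp) x).hasGradientAt.hasFDerivAt
          have h2 := (h1.const_mul lam).exp
          exact h2.congr_fderiv (by rw [smul_smul, mul_comm])
        have hsumd := HasFDerivAt.fun_sum (u := Finset.univ) (fun i _ => hterm i)
        refine hsumd.congr_fderiv ?_
        rw [hvdef, map_sum]
        exact Finset.sum_congr rfl fun i _ => by rw [map_smul]
      have hd := lineDeriv_of_gradient hv (x - p)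
      have hposv : 0 < ⟪v, x - p⟫_ℝ := by
        rw [hvdef, hinnerEq x]
        exact mul_pos hlam0 (hcore x hx1')
      have hgt := eventually_gt_of_hasDerivAt_pos hd hposv
      have hSnb : S ∈ 𝓝 x := mem_interior_iff_mem_nhds.1 hxint
      have hcurve : Tendsto (fun t : ℝ => x + t • (x - p)) (𝓝[>] (0:ℝ)) (𝓝 x) := by
        have hcont : Continuous (fun t : ℝ => x + t • (x - p)) :=
          continuous_const.add (continuous_id.smul continuous_const)
        have h3 := hcont.tendsto 0
        rw [zero_smul, add_zero] at h3
        exact h3.mono_left nhdsWithin_le_nhds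
      have hmem : ∀ᶠ t in 𝓝[>] (0:ℝ), x + t • (x - p) ∈ S :=
        hcurve.eventually (Filter.eventually_of_mem hSnb (fun y hy => hy))
      obtain ⟨t, htS, htgt⟩ := (hmem.and hgt).exists
      have h0 : (∑ i, Real.exp (lam * u i (x + (0:ℝ) • (x - p)))) = 1 := by
        rw [zero_smul, add_zero]; exact hx1'
      have h4 : (∑ i, Real.exp (lam * u i (x + t • (x - p)))) ≤ 1 := htS
      rw [h0] at htgt
      linarith
  · -- convexity
    intro hconv x hx y hy a b ha hb hab
    simp only [hSdef, Set.mem_setOf_eq] at hx hy ⊢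
    have hstep : ∀ i : I, Real.exp (lam * u i (a • x + b • y)) ≤
        a * Real.exp (lam * u i x) + b * Real.exp (lam * u i y) := by
      intro i
      have h1 : u i (a • x + b • y) ≤ a * u i x + b * u i y := by
        have := (hconv i).2 (Set.mem_univ x) (Set.mem_univ y) ha hb hab
        simpa [smul_eq_mul] using this
      have h2 : lam * u i (a • x + b • y) ≤ a * (lam * u i x) + b * (lam * u i y) := by
        have := mul_le_mul_of_nonneg_left h1 hlam0.le
        nlinarith [this]
      calc Real.exp (lam * u i (a • x + b • y))
          ≤ Real.exp (a * (lam * u i x) + b * (lam * u i y)) := Real.exp_le_exp.2 h2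
        _ ≤ a * Real.exp (lam * u i x) + b * Real.exp (lam * u i y) := by
            have := convexOn_exp.2 (Set.mem_univ (lam * u i x))
              (Set.mem_univ (lam * u i y)) ha hb hab
            simpa [smul_eq_mul] using this
    calc (∑ i, Real.exp (lam * u i (a • x + b • y)))
        ≤ ∑ i, (a * Real.exp (lam * u i x) + b * Real.exp (lam * u i y)) :=
          Finset.sum_le_sum fun i _ => hstep i
      _ = a * (∑ i, Real.exp (lam * u i x)) + b * (∑ i, Real.exp (lam * u i y)) := by
          rw [Finset.sum_add_distrib, Finset.mul_sum, Finset.mul_sum]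
      _ ≤ a * 1 + b * 1 :=
          add_le_add (mul_le_mul_of_nonneg_left hx ha) (mul_le_mul_of_nonneg_left hy hb)
      _ = 1 := by linarith
end

section
/- Fix i₁ ∈ I. There exist constants C > 0 and L₀ > 0 such that for every r with 0 < r ≤ 1 and every λ with λ·r ≥ L₀, and every x ∈ Σ_λ satisfying u_i(x) ≤ −λ^{−7/8} r^{1/8} for all i ∈ I \ {i₁}, the vector m(x) := ∑_{i∈I} e^{λ u_i(x)} w_i(x) N_i(x) is nonzero and |m(x)/|m(x)| − N_{i₁}(x)| ≤ C·e^{−(λ r)^{1/8}}, where |·| is the Euclidean norm and C, L₀ are independent of λ, r and x. -/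
open Matrix



lemma aux_dir {E : Type*} [NormedAddCommGroup E] [NormedSpace ℝ E]
    (m v : E) (a : ℝ) (hv : ‖v‖ = 1) (ha : 0 < a) (hE : ‖m - a • v‖ ≤ a / 2) :
    m ≠ 0 ∧ ‖‖m‖⁻¹ • m - v‖ ≤ 4 * ‖m - a • v‖ / a := by
  have hav : ‖a • v‖ = a := by rw [norm_smul, hv, mul_one, Real.norm_eq_abs, abs_of_pos ha]
  have hub : ‖a • v - m‖ = ‖m - a • v‖ := norm_sub_rev _ _
  have hm_lb : a / 2 ≤ ‖m‖ := by
    have h := norm_sub_norm_le (a • v) m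
    rw [hav, hub] at h
    linarith
  have hm0 : 0 < ‖m‖ := by linarith
  refine ⟨fun h => by simp [h] at hm0, ?_⟩
  have key : ‖m‖⁻¹ • m - v = ‖m‖⁻¹ • (m - a • v) + (‖m‖⁻¹ * a - 1) • v := by
    rw [smul_sub, smul_smul, sub_smul, one_smul]; abel
  have h2 : |a - ‖m‖| ≤ ‖m - a • v‖ := by
    calc |a - ‖m‖| = |‖a • v‖ - ‖m‖| := by rw [hav]
      _ ≤ ‖a • v - m‖ := abs_norm_sub_norm_le _ _
      _ = ‖m - a • v‖ := hub
  have h1 : |‖m‖⁻¹ * a - 1| = ‖m‖⁻¹ * |a - ‖m‖| := by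
    rw [show ‖m‖⁻¹ * a - 1 = ‖m‖⁻¹ * (a - ‖m‖) by field_simp, abs_mul,
      abs_of_pos (inv_pos.2 hm0)]
  have hinv : ‖m‖⁻¹ ≤ (a / 2)⁻¹ := inv_anti₀ (by linarith) hm_lb
  calc ‖‖m‖⁻¹ • m - v‖ = ‖‖m‖⁻¹ • (m - a • v) + (‖m‖⁻¹ * a - 1) • v‖ := by rw [key]
    _ ≤ ‖‖m‖⁻¹ • (m - a • v)‖ + ‖(‖m‖⁻¹ * a - 1) • v‖ := norm_add_le _ _
    _ = ‖m‖⁻¹ * ‖m - a • v‖ + |‖m‖⁻¹ * a - 1| := by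
        rw [norm_smul, norm_smul, hv, mul_one, Real.norm_eq_abs, Real.norm_eq_abs,
          abs_of_pos (inv_pos.2 hm0)]
    _ ≤ ‖m‖⁻¹ * ‖m - a • v‖ + ‖m‖⁻¹ * ‖m - a • v‖ := by rw [h1]; gcongr
    _ ≤ (a / 2)⁻¹ * ‖m - a • v‖ + (a / 2)⁻¹ * ‖m - a • v‖ := by gcongr
    _ = 4 * ‖m - a • v‖ / a := by field_simp; ring

lemma main_est {E : Type*} [NormedAddCommGroup E] [NormedSpace ℝ E]
    {I : Type} [Fintype I]
    (e w : I → ℝ) (N : I → E) (i₁ : I) (k M c δ : ℝ)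
    (hN : ∀ i, ‖N i‖ = 1) (hw : ∀ i, 0 < w i) (hwM : ∀ i, w i ≤ M)
    (hci : c ≤ w i₁) (he : ∀ i, 0 < e i) (hei : ∀ i, i ≠ i₁ → e i ≤ δ)
    (hδ0 : 0 < δ) (hc0 : 0 < c) (hM1 : 1 ≤ M)
    (hk : ((Fintype.card I : ℕ) : ℝ) ≤ k)
    (hsum : ∑ i, e i = 1)
    (hkMδ : k * M * δ ≤ min (1/2) (c/4)) :
    (∑ i, e i • (w i • N i)) ≠ 0 ∧
      ‖‖∑ i, e i • (w i • N i)‖⁻¹ • (∑ i, e i • (w i • N i)) - N i₁‖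
        ≤ 8 * k * M / c * δ := by
  classical
  have : Nonempty I := ⟨i₁⟩
  have hk1 : (1 : ℝ) ≤ k :=
    le_trans (by exact_mod_cast Nat.one_le_iff_ne_zero.2 Fintype.card_ne_zero) hk
  set m := ∑ i, e i • (w i • N i) with hmdef
  set v := N i₁ with hvdef
  set a : ℝ := e i₁ * w i₁ with hadef
  have hcard : ((Finset.univ.erase i₁).card : ℝ) ≤ k := by
    refine le_trans ?_ hk
    exact_mod_cast le_trans (Finset.card_le_card (Finset.erase_subset _ _))
      (le_of_eq Finset.card_univ)
  have hma : m - a • v = ∑ i ∈ Finset.univ.erase i₁, e i • (w i • N i) := by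
    have h := Finset.add_sum_erase Finset.univ (fun i => e i • (w i • N i))
      (Finset.mem_univ i₁)
    rw [hmdef, ← h, hadef, hvdef, mul_smul]
    abel
  have hE : ‖m - a • v‖ ≤ k * M * δ := by
    rw [hma]
    calc ‖∑ i ∈ Finset.univ.erase i₁, e i • (w i • N i)‖
        ≤ ∑ i ∈ Finset.univ.erase i₁, ‖e i • (w i • N i)‖ := norm_sum_le _ _
      _ ≤ ∑ _i ∈ Finset.univ.erase i₁, δ * M := by
          apply Finset.sum_le_sum
          intro i hi
          rw [norm_smul, norm_smul, hN i, mul_one, Real.norm_eq_abs, Real.norm_eq_abs,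
            abs_of_pos (he i), abs_of_pos (hw i)]
          exact mul_le_mul (hei i (Finset.ne_of_mem_erase hi)) (hwM i) (hw i).le hδ0.le
      _ = ((Finset.univ.erase i₁).card : ℝ) * (δ * M) := by
          rw [Finset.sum_const, nsmul_eq_mul]
      _ ≤ k * (δ * M) := by
          apply mul_le_mul_of_nonneg_right hcard (by positivity)
      _ = k * M * δ := by ring
  have hsum_small : ∑ i ∈ Finset.univ.erase i₁, e i ≤ k * δ := by
    calc ∑ i ∈ Finset.univ.erase i₁, e i ≤ ∑ _i ∈ Finset.univ.erase i₁, δ :=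
          Finset.sum_le_sum fun i hi => hei i (Finset.ne_of_mem_erase hi)
      _ = ((Finset.univ.erase i₁).card : ℝ) * δ := by rw [Finset.sum_const, nsmul_eq_mul]
      _ ≤ k * δ := mul_le_mul_of_nonneg_right hcard hδ0.le
  have he1 : 1 - k * δ ≤ e i₁ := by
    have h := Finset.add_sum_erase Finset.univ e (Finset.mem_univ i₁)
    rw [hsum] at h
    linarith
  have hkδ : k * δ ≤ 1/2 := by
    have h1 : k * δ ≤ k * M * δ := by
      nlinarith [mul_nonneg (mul_nonneg (by linarith : (0:ℝ) ≤ k) hδ0.le)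
        (by linarith : (0:ℝ) ≤ M - 1)]
    linarith [min_le_left (1/2 : ℝ) (c/4)]
  have ha : c / 2 ≤ a := by
    have h1 : (1:ℝ)/2 ≤ e i₁ := by linarith
    rw [hadef]
    nlinarith
  have ha0 : 0 < a := by linarith
  have hEha : ‖m - a • v‖ ≤ a / 2 := by
    have h1 : k * M * δ ≤ c / 4 := le_trans hkMδ (min_le_right _ _)
    linarith
  obtain ⟨hm0, hest⟩ := aux_dir m v a (hN i₁) ha0 hEha
  refine ⟨hm0, ?_⟩
  calc ‖‖m‖⁻¹ • m - v‖ ≤ 4 * ‖m - a • v‖ / a := hest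
    _ ≤ 4 * (k * M * δ) / (c / 2) :=
        div_le_div₀ (by positivity) (by linarith) (by linarith) ha
    _ = 8 * k * M / c * δ := by field_simp; ring



lemma grad_cont' {n : ℕ} (f : EuclideanSpace ℝ (Fin n) → ℝ) (hf : ContDiff ℝ (⊤ : ℕ∞) f) :
    Continuous fun x => gradient f x := by
  have : Continuous fun x => fderiv ℝ f x := hf.continuous_fderiv (by simp)
  exact ((InnerProductSpace.toDual ℝ (EuclideanSpace ℝ (Fin n))).symm.continuous).comp this

lemma W_cont' {n : ℕ} (f : EuclideanSpace ℝ (Fin n) → ℝ) (hf : ContDiff ℝ (⊤ : ℕ∞) f)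
    (G : EuclideanSpace ℝ (Fin n) → Matrix (Fin n) (Fin n) ℝ)
    (hG_smooth : ∀ i j, Continuous (fun x => G x i j))
    (hG_pd : ∀ x, (G x).PosDef) :
    Continuous fun x => Real.sqrt (dotProduct (fun j => gradient f x j)
      ((G x)⁻¹ *ᵥ fun j => gradient f x j)) := by
  have hg := grad_cont' f hf
  have hgj : ∀ j, Continuous fun x => gradient f x j := fun j =>
    (EuclideanSpace.proj j).continuous.comp hg
  have hGc : Continuous G := continuous_matrix hG_smooth
  have hinvc : Continuous fun x => (G x)⁻¹ := by
    simp only [Matrix.inv_def, Ring.inverse_eq_inv]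
    exact (hGc.matrix_det.inv₀ fun x => (hG_pd x).det_pos.ne').smul hGc.matrix_adjugate
  apply Real.continuous_sqrt.comp
  simp only [dotProduct, Matrix.mulVec]
  apply continuous_finset_sum
  intro j _
  exact (hgj j).mul <| continuous_finset_sum _ fun k _ =>
    (hinvc.matrix_elem j k).mul (hgj k)

lemma W_pos' {n : ℕ} (f : EuclideanSpace ℝ (Fin n) → ℝ)
    (G : Matrix (Fin n) (Fin n) ℝ) (hG : G.PosDef)
    (x : EuclideanSpace ℝ (Fin n)) (hg : gradient f x ≠ 0) :
    0 < Real.sqrt (dotProduct (fun j => gradient f x j)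
      (G⁻¹ *ᵥ fun j => gradient f x j)) := by
  have hv : (fun j => gradient f x j) ≠ 0 := fun h => hg (by ext j; exact congrFun h j)
  have h := hG.inv.dotProduct_mulVec_pos hv
  rw [show star (fun j => gradient f x j) = fun j => gradient f x j from funext fun j => rfl] at h
  exact Real.sqrt_pos.2 h


/-- In the setting of a convex Riemannian polytope type domain
`Ω = ⋂ i, {u i ≤ 0}` in `ℝⁿ` (`n ≥ 2`), with nonvanishing Euclidean gradients on `Ω`
and a smooth field `G` of symmetric positive definite matrices, set
`w_i(x) := √(∇u_i(x)ᵀ G(x)⁻¹ ∇u_i(x))`, `N_i(x) := ∇u_i(x)/|∇u_i(x)|` and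
`m(x) := ∑ i, e^{λ u_i(x)} w_i(x) N_i(x)`.  Fix `i₁ ∈ I`.  There exist `C > 0` and
`L₀ > 0` (independent of `λ`, `r`, `x`) such that for all `0 < r ≤ 1`, all `λ` with
`λ r ≥ L₀`, and all `x ∈ Σ_λ` with `u_i(x) ≤ -λ^{-7/8} r^{1/8}` for every `i ≠ i₁`,
the vector `m(x)` is nonzero and `|m(x)/|m(x)| − N_{i₁}(x)| ≤ C e^{-(λ r)^{1/8}}`. -/
theorem smoothed_gauss_map_near_face
    {n : ℕ} (hn : 2 ≤ n) (I : Type) [Fintype I] [Nonempty I]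
    (u : I → EuclideanSpace ℝ (Fin n) → ℝ)
    (hu_smooth : ∀ i, ContDiff ℝ (⊤ : ℕ∞) (u i))
    (hu_reg : ∀ i x, u i x = 0 → gradient (u i) x ≠ 0)
    (hΩ_bdd : Bornology.IsBounded {x : EuclideanSpace ℝ (Fin n) | ∀ i, u i x ≤ 0})
    (hΩ_conv : Convex ℝ {x : EuclideanSpace ℝ (Fin n) | ∀ i, u i x ≤ 0})
    (hΩ_int : (interior {x : EuclideanSpace ℝ (Fin n) | ∀ i, u i x ≤ 0}).Nonempty)
    (hgrad_ne : ∀ i, ∀ x ∈ {x : EuclideanSpace ℝ (Fin n) | ∀ j, u j x ≤ 0},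
      gradient (u i) x ≠ 0)
    (G : EuclideanSpace ℝ (Fin n) → Matrix (Fin n) (Fin n) ℝ)
    (hG_smooth : ∀ i j, ContDiff ℝ (⊤ : ℕ∞) (fun x => G x i j))
    (hG_pd : ∀ x, (G x).PosDef)
    (i₁ : I) :
    ∃ C : ℝ, 0 < C ∧ ∃ L₀ : ℝ, 0 < L₀ ∧
      ∀ r : ℝ, 0 < r → r ≤ 1 →
        ∀ lam : ℝ, L₀ ≤ lam * r →
          ∀ x : EuclideanSpace ℝ (Fin n),
            (∑ i, Real.exp (lam * u i x)) = 1 →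
            (∀ i, i ≠ i₁ → u i x ≤ -(lam ^ (-(7 : ℝ) / 8) * r ^ ((1 : ℝ) / 8))) →
            (∑ i, Real.exp (lam * u i x) •
                (Real.sqrt (dotProduct (fun j => gradient (u i) x j)
                    ((G x)⁻¹ *ᵥ fun j => gradient (u i) x j)) •
                  (‖gradient (u i) x‖⁻¹ • gradient (u i) x))) ≠ 0 ∧
            ‖‖∑ i, Real.exp (lam * u i x) •
                (Real.sqrt (dotProduct (fun j => gradient (u i) x j)
                    ((G x)⁻¹ *ᵥ fun j => gradient (u i) x j)) •
                  (‖gradient (u i) x‖⁻¹ • gradient (u i) x))‖⁻¹ •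
              (∑ i, Real.exp (lam * u i x) •
                (Real.sqrt (dotProduct (fun j => gradient (u i) x j)
                    ((G x)⁻¹ *ᵥ fun j => gradient (u i) x j)) •
                  (‖gradient (u i) x‖⁻¹ • gradient (u i) x)))
              - ‖gradient (u i₁) x‖⁻¹ • gradient (u i₁) x‖
              ≤ C * Real.exp (-((lam * r) ^ ((1 : ℝ) / 8))) := by
  classical
  set Ω : Set (EuclideanSpace ℝ (Fin n)) := {x | ∀ i, u i x ≤ 0} with hΩdef
  set W : I → EuclideanSpace ℝ (Fin n) → ℝ := fun i x =>
    Real.sqrt (dotProduct (fun j => gradient (u i) x j)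
      ((G x)⁻¹ *ᵥ fun j => gradient (u i) x j)) with hWdef
  have hWc : ∀ i, Continuous (W i) := fun i =>
    W_cont' (u i) (hu_smooth i) G (fun i j => (hG_smooth i j).continuous) hG_pd
  have hWpos : ∀ i, ∀ x ∈ Ω, 0 < W i x := fun i x hx =>
    W_pos' (u i) (G x) (hG_pd x) x (hgrad_ne i x hx)
  have hΩclosed : IsClosed Ω := by
    have : Ω = ⋂ i, (u i) ⁻¹' Set.Iic 0 := by
      ext x; simp [hΩdef, Set.mem_iInter]
    rw [this]
    exact isClosed_iInter fun i => isClosed_Iic.preimage (hu_smooth i).continuous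
  have hΩcomp : IsCompact Ω := Metric.isCompact_of_isClosed_isBounded hΩclosed hΩ_bdd
  have hΩne : Ω.Nonempty := hΩ_int.mono interior_subset
  have hmin : ∀ i, ∃ c, 0 < c ∧ ∀ x ∈ Ω, c ≤ W i x := by
    intro i
    obtain ⟨x₀, hx₀, hmin⟩ := hΩcomp.exists_isMinOn hΩne (hWc i).continuousOn
    exact ⟨W i x₀, hWpos i x₀ hx₀, fun y hy => hmin hy⟩
  choose cf hcf0 hcf using hmin
  have hmax : ∀ i, ∃ M, ∀ x ∈ Ω, W i x ≤ M := by
    intro i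
    obtain ⟨x₀, hx₀, hmax⟩ := hΩcomp.exists_isMaxOn hΩne (hWc i).continuousOn
    exact ⟨W i x₀, fun y hy => hmax hy⟩
  choose Mf hMf using hmax
  set c : ℝ := Finset.univ.inf' Finset.univ_nonempty cf with hcdef
  set M : ℝ := max 1 (Finset.univ.sup' Finset.univ_nonempty Mf) with hMdef
  have hc0 : 0 < c := (Finset.lt_inf'_iff _).2 fun i _ => hcf0 i
  have hcW : ∀ i, ∀ x ∈ Ω, c ≤ W i x := fun i x hx =>
    le_trans (Finset.inf'_le _ (Finset.mem_univ i)) (hcf i x hx)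
  have hM1 : (1 : ℝ) ≤ M := le_max_left _ _
  have hMW : ∀ i, ∀ x ∈ Ω, W i x ≤ M := fun i x hx =>
    le_trans (hMf i x hx) (le_trans (Finset.le_sup' _ (Finset.mem_univ i)) (le_max_right _ _))
  set k : ℝ := (Fintype.card I : ℝ) with hkdef
  have hk1 : (1 : ℝ) ≤ k := by
    rw [hkdef]
    exact_mod_cast Nat.one_le_iff_ne_zero.2 Fintype.card_ne_zero
  have hkM : 0 < k * M := by positivity
  set η : ℝ := min (1/2) (c/4) / (k * M) with hηdef
  have hη0 : 0 < η := by
    apply div_pos _ hkM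
    simp [hc0]
  set t : ℝ := 1 + |Real.log (1/η)| with htdef
  have ht1 : (1 : ℝ) ≤ t := by
    rw [htdef]
    have := abs_nonneg (Real.log (1/η)); linarith
  have ht0 : (0:ℝ) < t := by linarith
  have hηt : Real.exp (-t) ≤ η := by
    have h1 : Real.log (1/η) ≤ t := by
      rw [htdef]; have := le_abs_self (Real.log (1/η)); linarith
    calc Real.exp (-t) ≤ Real.exp (-(Real.log (1/η))) := Real.exp_le_exp.2 (by linarith)
      _ = η := by rw [one_div, Real.log_inv, neg_neg, Real.exp_log hη0]
  refine ⟨8 * k * M / c, by positivity, t ^ 8, by positivity, ?_⟩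
  intro r hr0 hr1 lam hL x hS hside
  have hL₀pos : (0:ℝ) < t ^ 8 := by positivity
  have hlamr : 0 < lam * r := lt_of_lt_of_le hL₀pos hL
  have hlam0 : 0 < lam := by
    rcases mul_pos_iff.1 hlamr with ⟨h, _⟩ | ⟨_, h2⟩
    · exact h
    · linarith
  have hxΩ : x ∈ Ω := by
    intro i
    have hle1 : Real.exp (lam * u i x) ≤ 1 := by
      rw [← hS]
      exact Finset.single_le_sum (f := fun i => Real.exp (lam * u i x))
        (fun j _ => (Real.exp_pos _).le) (Finset.mem_univ i)
    have h2 := Real.exp_le_one_iff.1 hle1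
    by_contra h
    push_neg at h
    nlinarith
  have hεt : t ≤ (lam * r) ^ ((1:ℝ)/8) := by
    have h8 : ((t:ℝ) ^ 8) ^ ((1:ℝ)/8) = t := by
      rw [← Real.rpow_natCast t 8, ← Real.rpow_mul ht0.le]
      norm_num
    rw [← h8]
    exact Real.rpow_le_rpow hL₀pos.le hL (by norm_num)
  have hδ0 : (0:ℝ) < Real.exp (-((lam * r) ^ ((1:ℝ)/8))) := Real.exp_pos _
  have hδη : Real.exp (-((lam * r) ^ ((1:ℝ)/8))) ≤ η :=
    le_trans (Real.exp_le_exp.2 (by linarith)) hηt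
  have hkMδ : k * M * Real.exp (-((lam * r) ^ ((1:ℝ)/8))) ≤ min (1/2) (c/4) := by
    have h := mul_le_mul_of_nonneg_left hδη hkM.le
    rwa [hηdef, mul_div_cancel₀ _ hkM.ne'] at h
  have hexp_small : ∀ i, i ≠ i₁ →
      Real.exp (lam * u i x) ≤ Real.exp (-((lam * r) ^ ((1:ℝ)/8))) := by
    intro i hi
    apply Real.exp_le_exp.2
    have hpow : lam * lam ^ (-(7:ℝ)/8) = lam ^ ((1:ℝ)/8) := by
      calc lam * lam ^ (-(7:ℝ)/8) = lam ^ (1:ℝ) * lam ^ (-(7:ℝ)/8) := by rw [Real.rpow_one]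
        _ = lam ^ ((1:ℝ) + -(7:ℝ)/8) := (Real.rpow_add hlam0 _ _).symm
        _ = lam ^ ((1:ℝ)/8) := by norm_num
    calc lam * u i x ≤ lam * -(lam ^ (-(7:ℝ)/8) * r ^ ((1:ℝ)/8)) :=
          mul_le_mul_of_nonneg_left (hside i hi) hlam0.le
      _ = -((lam * lam ^ (-(7:ℝ)/8)) * r ^ ((1:ℝ)/8)) := by ring
      _ = -(lam ^ ((1:ℝ)/8) * r ^ ((1:ℝ)/8)) := by rw [hpow]
      _ = -((lam * r) ^ ((1:ℝ)/8)) := by rw [Real.mul_rpow hlam0.le hr0.le]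
  have hN1 : ∀ i : I, ‖(‖gradient (u i) x‖⁻¹ • gradient (u i) x : EuclideanSpace ℝ (Fin n))‖
      = 1 := by
    intro i
    rw [norm_smul, norm_inv, norm_norm,
      inv_mul_cancel₀ (norm_ne_zero_iff.2 (hgrad_ne i x hxΩ))]
  exact main_est (fun i => Real.exp (lam * u i x)) (fun i => W i x)
    (fun i => ‖gradient (u i) x‖⁻¹ • gradient (u i) x) i₁ k M c
    (Real.exp (-((lam * r) ^ ((1:ℝ)/8)))) hN1 (fun i => hWpos i x hxΩ)
    (fun i => hMW i x hxΩ) (hcW i₁ x hxΩ) (fun i => Real.exp_pos _)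
    hexp_small hδ0 hc0 hM1 hkdef.ge hS hkMδ
end
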